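/- Let (S, ⊑) be a cpo, let H be a nonzero finite-dimensional complex Hilbert space, let (Pᵢ, fᵢ)_{i≥1} be a monotone S-labeled sequence of partitions of H, let P∞ be the eventual supremum of (Pᵢ), and let f∞ : P∞ → S be a limit labeling for this data. Then for every s₀ ∈ S, the following equality of closed subspaces of H holds: ⨅_{n≥1} ⨆{ p ∈ Pₙ : fₙ(p) ⊑ s₀ } = ⨆{ p ∈ P∞ : f∞(p) ⊑ s₀ }. -/

import Mathlib

variable {H : Type*} [NormedAddCommGroup H] [InnerProductSpace ℂ H]

/-- Two subspaces of a complex inner product space are orthogonal when every vector of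
one is orthogonal to every vector of the other. -/
def Orth (p q : Submodule ℂ H) : Prop :=
  ∀ x ∈ p, ∀ y ∈ q, @inner ℂ H _ x y = 0

/-- A partition of `H` is a set of nonzero closed subspaces of `H` that are pairwise
orthogonal and whose supremum in the complete lattice of closed subspaces of `H`
(i.e. the topological closure of the submodule supremum) is all of `H`. -/
def IsPartition (P : Set (Submodule ℂ H)) : Prop :=
  (∀ p ∈ P, p ≠ ⊥) ∧
  (∀ p ∈ P, IsClosed (p : Set H)) ∧
  (∀ p ∈ P, ∀ q ∈ P, p ≠ q → Orth p q) ∧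
  (sSup P).topologicalClosure = ⊤

/-- `P₁` refines `P₂` when every cell of `P₁` is contained in some cell of `P₂`. -/
def Refines (P₁ P₂ : Set (Submodule ℂ H)) : Prop :=
  ∀ p ∈ P₁, ∃ q ∈ P₂, p ≤ q

/-- A multicell of a partition `P` is the supremum (in the lattice of closed subspaces)
of a possibly empty subset of `P`. -/
def IsMulticell (P : Set (Submodule ℂ H)) (m : Submodule ℂ H) : Prop :=
  ∃ C ⊆ P, m = (sSup C).topologicalClosure

variable {S : Type*} [PartialOrder S]

/-- A monotone `S`-labeled sequence of partitions of `H`: a sequence `P i` of partitions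
together with labelings `f i` of their cells such that for `i ≤ j` and non-orthogonal cells
`p ∈ P i`, `q ∈ P j` one has `f i p ⊑ f j q`. -/
def MonotoneLabeled (P : ℕ → Set (Submodule ℂ H)) (f : ℕ → Submodule ℂ H → S) : Prop :=
  ∀ i j : ℕ, i ≤ j → ∀ p ∈ P i, ∀ q ∈ P j, ¬ Orth p q → f i p ≤ f j q

/-- A partition `Pinf` is the eventual supremum of the sequence `P` if, for all sufficiently
large `n`, `Pinf` is the least upper bound of `{P i : i ≥ n}` in the refinement order. -/
def IsEventualSup (P : ℕ → Set (Submodule ℂ H)) (Pinf : Set (Submodule ℂ H)) : Prop :=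
  ∃ N : ℕ, ∀ n, N ≤ n →
    (∀ i, n ≤ i → Refines (P i) Pinf) ∧
      ∀ Q : Set (Submodule ℂ H), IsPartition Q →
        (∀ i, n ≤ i → Refines (P i) Q) → Refines Pinf Q

/-- A limit labeling `finf : Pinf → S` for a monotone `S`-labeled sequence of partitions:
for every cell `pinf ∈ Pinf` and every sequence of cells `p i ∈ P i` with consecutive cells
not orthogonal and each `p i` not orthogonal to `pinf`, `finf pinf` is the supremum of the
(monotone increasing) sequence `f i (p i)`. -/
def IsLimitLabeling (P : ℕ → Set (Submodule ℂ H)) (f : ℕ → Submodule ℂ H → S)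
    (Pinf : Set (Submodule ℂ H)) (finf : Submodule ℂ H → S) : Prop :=
  ∀ pinf ∈ Pinf, ∀ p : ℕ → Submodule ℂ H, (∀ i, p i ∈ P i) →
    (∀ i, ¬ Orth (p i) (p (i + 1))) → (∀ i, ¬ Orth (p i) pinf) →
      IsLUB (Set.range fun i => f i (p i)) (finf pinf)

/-!
Say that `p` meets `K` when they are not orthogonal. In finite dimension the cells of a partition
satisfying a predicate span the orthogonal complement of the other cells. Hence each inclusion
says that a "good" cell is orthogonal to every "bad" cell of the other partition; and a subspace
meeting `K` lies in the span of the cells of `Q` it meets, one of which must then meet `K`.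
Iterating forwards and backwards threads through any cell of `Pₙ` meeting `K` a sequence of cells
`pᵢ ∈ Pᵢ`, consecutive ones meeting, all meeting `K`, whose labels increase to `f∞`. A bad cell of
`Pₙ` meeting a good limit cell thus has label at most `f∞ ≤ s₀`. For a bad limit cell `c` met by
the limit of the good parts, the chain eventually lies inside `c` (as `Pᵢ` refines `P∞`) and meets
the good part of `Pₘ`, so its labels are eventually, hence always, at most `s₀`, and so is `f∞ c`.
-/
open Submodule

theorem orth_iff_isOrtho {p q : Submodule ℂ H} : Orth p q ↔ p ⟂ q :=
  isOrtho_iff_inner_eq.symm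

theorem Submodule.IsOrtho.eq_orthogonal_of_sup_eq_top {𝕜 E : Type*} [RCLike 𝕜]
    [NormedAddCommGroup E] [InnerProductSpace 𝕜 E] {U V : Submodule 𝕜 E} (hUV : U ⟂ V)
    (hsup : U ⊔ V = ⊤) : U = Vᗮ :=
  calc U = U ⊔ V ⊓ Vᗮ := by rw [inf_orthogonal_eq_bot, sup_bot_eq]
    _ = (U ⊔ V) ⊓ Vᗮ := (sup_inf_assoc_of_le V (isOrtho_iff_le.mp hUV)).symm
    _ = Vᗮ := by rw [hsup, top_inf_eq]

theorem Submodule.isOrtho_span_starProjection_iff {𝕜 E : Type*} [RCLike 𝕜]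
    [NormedAddCommGroup E] [InnerProductSpace 𝕜 E] {U K : Submodule 𝕜 E}
    [K.HasOrthogonalProjection] (hUK : U ≤ K) (v : E) :
    U ⟂ 𝕜 ∙ K.starProjection v ↔ U ⟂ 𝕜 ∙ v := by
  have hinner : ∀ u ∈ U, inner 𝕜 u (K.starProjection v) = inner 𝕜 u v := fun u hu => by
    rw [← inner_starProjection_left_eq_right, starProjection_eq_self_iff.mpr (hUK hu)]
  simp only [isOrtho_iff_le, SetLike.le_def, mem_orthogonal_singleton_iff_inner_left]
  exact forall₂_congr fun u hu => by rw [hinner u hu]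

theorem exists_chain_through {α : Type*} {X : ℕ → Set α} {R : α → α → Prop}
    (hfwd : ∀ i, ∀ a ∈ X i, ∃ b ∈ X (i + 1), R a b)
    (hbwd : ∀ i, ∀ b ∈ X (i + 1), ∃ a ∈ X i, R a b) {n : ℕ} {a : α} (ha : a ∈ X n) :
    ∃ s : ℕ → α, s n = a ∧ (∀ i, s i ∈ X i) ∧ ∀ i, R (s i) (s (i + 1)) := by
  induction n generalizing X with
  | zero =>
    choose! F hFX hFR using hfwd
    let s : ℕ → α := fun i => Nat.rec a (fun i b => F i b) i
    have hsX : ∀ i, s i ∈ X i := fun i => by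
      induction i with
      | zero => exact ha
      | succ i ih => exact hFX i _ ih
    exact ⟨s, rfl, hsX, fun i => hFR i _ (hsX i)⟩
  | succ n ih =>
    obtain ⟨s, hsn, hsX, hsR⟩ :=
      ih (X := fun i => X (i + 1)) (fun i => hfwd (i + 1)) (fun i => hbwd (i + 1)) ha
    obtain ⟨a₀, ha₀, hR₀⟩ := hbwd 0 (s 0) (hsX 0)
    refine ⟨fun | 0 => a₀ | i + 1 => s i, hsn, ?_, ?_⟩
    · rintro (_ | i)
      exacts [ha₀, hsX i]
    · rintro (_ | i)
      exacts [hR₀, hsR i]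

namespace IsPartition

variable {P Q : Set (Submodule ℂ H)}

theorem isOrtho (hP : IsPartition P) {p q : Submodule ℂ H} (hp : p ∈ P) (hq : q ∈ P)
    (hpq : p ≠ q) : p ⟂ q :=
  orth_iff_isOrtho.mp (hP.2.2.1 p hp q hq hpq)

theorem sSup_eq_top [FiniteDimensional ℂ H] (hP : IsPartition P) : sSup P = ⊤ := by
  rw [← hP.2.2.2, topologicalClosure_eq_self]

theorem sSup_sep_eq_orthogonal [FiniteDimensional ℂ H] (hP : IsPartition P)
    (r : Submodule ℂ H → Prop) : sSup {p ∈ P | r p} = (sSup {p ∈ P | ¬ r p})ᗮ := by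
  refine IsOrtho.eq_orthogonal_of_sup_eq_top ?_ ?_
  · refine isOrtho_sSup_left.mpr fun p hp => isOrtho_sSup_right.mpr fun q hq => ?_
    exact hP.isOrtho hp.1 hq.1 fun hpq => hq.2 (hpq ▸ hp.2)
  · refine eq_top_iff.mpr (hP.sSup_eq_top ▸ sSup_le fun p hp => ?_)
    by_cases h : r p
    · exact le_sup_of_le_left (le_sSup ⟨hp, h⟩)
    · exact le_sup_of_le_right (le_sSup ⟨hp, h⟩)

theorem exists_not_isOrtho [FiniteDimensional ℂ H] (hQ : IsPartition Q)
    {p K : Submodule ℂ H} (hpK : ¬ p ⟂ K) : ∃ q ∈ Q, ¬ p ⟂ q ∧ ¬ q ⟂ K := by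
  by_contra! hQK
  have hlinked : sSup {q ∈ Q | ¬ p ⟂ q} ⟂ K :=
    isOrtho_sSup_left.mpr fun q hq => hQK q hq.1 hq.2
  have hp : p ≤ sSup {q ∈ Q | ¬ p ⟂ q} := by
    rw [hQ.sSup_sep_eq_orthogonal, ← isOrtho_iff_le, isOrtho_sSup_right]
    exact fun q hq => not_not.mp hq.2
  exact hpK (hlinked.mono_left hp)

end IsPartition

theorem Refines.le_of_not_isOrtho {P Q : Set (Submodule ℂ H)} (hQP : Refines Q P)
    (hP : IsPartition P) {q c : Submodule ℂ H} (hq : q ∈ Q) (hc : c ∈ P) (hqc : ¬ q ⟂ c) :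
    q ≤ c := by
  obtain ⟨c', hc', hqc'⟩ := hQP q hq
  obtain rfl : c' = c := by_contra fun hne => hqc ((hP.isOrtho hc' hc hne).mono_left hqc')
  exact hqc'

theorem exists_cell_chain_through [FiniteDimensional ℂ H] {P : ℕ → Set (Submodule ℂ H)}
    (hP : ∀ i, IsPartition (P i)) {K q : Submodule ℂ H} {n : ℕ} (hq : q ∈ P n)
    (hqK : ¬ q ⟂ K) :
    ∃ p : ℕ → Submodule ℂ H, p n = q ∧ (∀ i, p i ∈ P i) ∧
      (∀ i, ¬ Orth (p i) (p (i + 1))) ∧ ∀ i, ¬ p i ⟂ K := by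
  let X i := {p ∈ P i | ¬ p ⟂ K}
  have hfwd : ∀ i, ∀ p ∈ X i, ∃ q ∈ X (i + 1), ¬ p ⟂ q := by
    rintro i p ⟨-, hpK⟩
    obtain ⟨q, hq, hpq, hqK⟩ := (hP (i + 1)).exists_not_isOrtho hpK
    exact ⟨q, ⟨hq, hqK⟩, hpq⟩
  have hbwd : ∀ i, ∀ q ∈ X (i + 1), ∃ p ∈ X i, ¬ p ⟂ q := by
    rintro i q ⟨-, hqK⟩
    obtain ⟨p, hp, hqp, hpK⟩ := (hP i).exists_not_isOrtho hqK
    exact ⟨p, ⟨hp, hpK⟩, fun hpq => hqp hpq.symm⟩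
  obtain ⟨p, hpn, hpX, hpR⟩ := exists_chain_through hfwd hbwd (show q ∈ X n from ⟨hq, hqK⟩)
  simp only [orth_iff_isOrtho]
  exact ⟨p, hpn, fun i => (hpX i).1, hpR, fun i => (hpX i).2⟩

theorem MonotoneLabeled.monotone_chain {P : ℕ → Set (Submodule ℂ H)}
    {f : ℕ → Submodule ℂ H → S} (hf : MonotoneLabeled P f) {p : ℕ → Submodule ℂ H}
    (hp : ∀ i, p i ∈ P i) (hpp : ∀ i, ¬ Orth (p i) (p (i + 1))) :
    Monotone fun i => f i (p i) :=
  monotone_nat_of_le_succ fun i => hf i (i + 1) i.le_succ _ (hp i) _ (hp (i + 1)) (hpp i)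

theorem MonotoneLabeled.le_of_not_isOrtho_sSup {P : ℕ → Set (Submodule ℂ H)}
    {f : ℕ → Submodule ℂ H → S} (hf : MonotoneLabeled P f) {m : ℕ} {p : Submodule ℂ H}
    (hp : p ∈ P m) {s₀ : S} (hps : ¬ p ⟂ sSup {q ∈ P m | f m q ≤ s₀}) : f m p ≤ s₀ := by
  obtain ⟨q, ⟨hq, hqs⟩, hpq⟩ : ∃ q ∈ {q ∈ P m | f m q ≤ s₀}, ¬ p ⟂ q := by
    simpa only [isOrtho_sSup_right, not_forall, exists_prop] using hps
  exact (hf m m le_rfl p hp q hq (orth_iff_isOrtho.not.mpr hpq)).trans hqs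

theorem IsLimitLabeling.le_of_eventually_le {P : ℕ → Set (Submodule ℂ H)}
    {f : ℕ → Submodule ℂ H → S} {Pinf : Set (Submodule ℂ H)} {finf : Submodule ℂ H → S}
    (hfinf : IsLimitLabeling P f Pinf finf) (hf : MonotoneLabeled P f)
    {c : Submodule ℂ H} (hc : c ∈ Pinf) {p : ℕ → Submodule ℂ H} (hpP : ∀ i, p i ∈ P i)
    (hpp : ∀ i, ¬ Orth (p i) (p (i + 1))) (hpc : ∀ i, ¬ Orth (p i) c) {s₀ : S} {N : ℕ}
    (hN : ∀ m, N ≤ m → f m (p m) ≤ s₀) : finf c ≤ s₀ := by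
  refine (hfinf c hc p hpP hpp hpc).2 ?_
  rintro _ ⟨i, rfl⟩
  exact (hf.monotone_chain hpP hpp (le_max_left i N)).trans (hN _ (le_max_right i N))

theorem IsLimitLabeling.le_sSup_labeled [FiniteDimensional ℂ H]
    {P : ℕ → Set (Submodule ℂ H)} {f : ℕ → Submodule ℂ H → S} {Pinf : Set (Submodule ℂ H)}
    {finf : Submodule ℂ H → S} (hfinf : IsLimitLabeling P f Pinf finf)
    (hP : ∀ i, IsPartition (P i)) {c : Submodule ℂ H} (hc : c ∈ Pinf) {s₀ : S}
    (hcs : finf c ≤ s₀) (n : ℕ) : c ≤ sSup {p ∈ P n | f n p ≤ s₀} := by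
  rw [(hP n).sSup_sep_eq_orthogonal, ← isOrtho_iff_le, isOrtho_sSup_right]
  rintro q ⟨hq, hqs⟩
  by_contra hcq
  obtain ⟨p, rfl, hpP, hpp, hpc⟩ := exists_cell_chain_through hP hq fun h => hcq h.symm
  have hlub := hfinf c hc p hpP hpp fun i => orth_iff_isOrtho.not.mpr (hpc i)
  exact hqs ((hlub.1 ⟨n, rfl⟩).trans hcs)

theorem IsLimitLabeling.iInf_sSup_labeled_le [FiniteDimensional ℂ H]
    {P : ℕ → Set (Submodule ℂ H)} {f : ℕ → Submodule ℂ H → S} {Pinf : Set (Submodule ℂ H)}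
    {finf : Submodule ℂ H → S} (hfinf : IsLimitLabeling P f Pinf finf)
    (hP : ∀ i, IsPartition (P i)) (hf : MonotoneLabeled P f) (hPinf : IsPartition Pinf)
    (hev : IsEventualSup P Pinf) (s₀ : S) :
    ⨅ n, sSup {p ∈ P n | f n p ≤ s₀} ≤ sSup {p ∈ Pinf | finf p ≤ s₀} := by
  obtain ⟨N, hN⟩ := hev
  rw [hPinf.sSup_sep_eq_orthogonal]
  intro v hv
  rw [← span_singleton_le_iff_mem, ← isOrtho_iff_le, isOrtho_sSup_right]
  rintro c ⟨hc, hcs⟩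
  by_contra hvc
  -- the chain has to see the component of `v` in `c`, not just `c`
  set u := c.starProjection v
  have huc : ℂ ∙ u ≤ c := (span_singleton_le_iff_mem _ _).mpr (c.starProjection_apply_mem v)
  have hcu : ¬ c ⟂ ℂ ∙ u := by
    rwa [isOrtho_span_starProjection_iff le_rfl, isOrtho_comm]
  obtain ⟨q, hq, -, hqu⟩ := (hP 0).exists_not_isOrtho hcu
  obtain ⟨p, -, hpP, hpp, hpu⟩ := exists_cell_chain_through hP hq hqu
  have hpc : ∀ i, ¬ p i ⟂ c := fun i h => hpu i (h.mono_right huc)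
  have hbound : ∀ m, N ≤ m → f m (p m) ≤ s₀ := by
    intro m hm
    have hpmc : p m ≤ c := ((hN N le_rfl).1 m hm).le_of_not_isOrtho hPinf (hpP m) hc (hpc m)
    refine hf.le_of_not_isOrtho_sSup (hpP m) fun hps => hpu m ?_
    rw [isOrtho_span_starProjection_iff hpmc]
    exact hps.mono_right ((span_singleton_le_iff_mem _ _).mpr (mem_iInf _ |>.mp hv m))
  exact hcs (hfinf.le_of_eventually_le hf hc hpP hpp (fun i => orth_iff_isOrtho.not.mpr (hpc i))
    hbound)

theorem iInf_labeled_sup_eq_limit_sup_general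
    [FiniteDimensional ℂ H]
    (P : ℕ → Set (Submodule ℂ H)) (hP : ∀ i, IsPartition (P i))
    (f : ℕ → Submodule ℂ H → S) (hf : MonotoneLabeled P f)
    (Pinf : Set (Submodule ℂ H)) (hPinf : IsPartition Pinf)
    (hev : IsEventualSup P Pinf)
    (finf : Submodule ℂ H → S) (hfinf : IsLimitLabeling P f Pinf finf)
    (s₀ : S) :
    (⨅ n : ℕ, (sSup {p ∈ P n | f n p ≤ s₀}).topologicalClosure) =
      (sSup {p ∈ Pinf | finf p ≤ s₀}).topologicalClosure := by
  simp only [topologicalClosure_eq_self]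
  refine le_antisymm (hfinf.iInf_sSup_labeled_le hP hf hPinf hev s₀) ?_
  exact le_iInf fun n => sSup_le fun c hc => hfinf.le_sSup_labeled hP hc.1 hc.2 n

/-- Let `S` be a cpo, `H` a nonzero finite-dimensional complex Hilbert
space, `(P i, f i)` a monotone `S`-labeled sequence of partitions of `H`, `Pinf` the eventual
supremum of `(P i)`, and `finf` a limit labeling.  Then for every `s₀ ∈ S`, in the complete
lattice of closed subspaces of `H`,
`⨅ n, ⨆ {p ∈ P n | f n p ⊑ s₀} = ⨆ {p ∈ Pinf | finf p ⊑ s₀}`. -/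
theorem iInf_labeled_sup_eq_limit_sup
    (hcpo : ∀ g : ℕ → S, Monotone g → ∃ s, IsLUB (Set.range g) s)
    [FiniteDimensional ℂ H] [Nontrivial H]
    (P : ℕ → Set (Submodule ℂ H)) (hP : ∀ i, IsPartition (P i))
    (f : ℕ → Submodule ℂ H → S) (hf : MonotoneLabeled P f)
    (Pinf : Set (Submodule ℂ H)) (hPinf : IsPartition Pinf)
    (hev : IsEventualSup P Pinf)
    (finf : Submodule ℂ H → S) (hfinf : IsLimitLabeling P f Pinf finf)
    (s₀ : S) :
    (⨅ n : ℕ, (sSup {p ∈ P n | f n p ≤ s₀}).topologicalClosure) =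
      (sSup {p ∈ Pinf | finf p ≤ s₀}).topologicalClosure :=
  iInf_labeled_sup_eq_limit_sup_general P hP f hf Pinf hPinf hev finf hfinf s₀
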